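/- Let G be a 2-connected graph, C a longest cycle in G, and suppose N_C(x₁) = N_C(x₂) = {y₁} is a single vertex for the endpoints x₁, x₂ of a longest path P in G \ C of length p ≥ 2. Then there exists an edge zw with z an internal vertex of P and w ∈ V(C) \ {y₁}, and moreover x₂z⁻ ∈ E(G) where z⁻ is the predecessor of z on P, provided p = δ − 1 and |N_C(x₂)| = 1. -/

import Mathlib

/-!
By maximality of `P` outside `C`, every neighbour of an end of `P` off `C` lies on `P`; since
`x₁` has only `y₁` on `C` and degree at least `δ = p + 1`, it is adjacent to every other vertex
of `P`, and likewise `x₂`. So `P + x₂x₁` is a cycle, and rotating it shows that every vertex of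
`P` is the end of a longest path outside `C`: the vertex set of `P` is closed under neighbours
off `C`. Since `G - y₁` is connected, some edge `zw` leaves `V(P)` avoiding `y₁`; then `w` lies
on `C`, `z` is not an end of `P`, and its predecessor on `P` is adjacent to `x₂`.
-/

open SimpleGraph Finset

namespace Paper

variable {V : Type*}

/-- Number of connected components of `G` after deleting the vertex set `S`. -/
noncomputable def compCount (G : SimpleGraph V) (S : Set V) : ℕ :=
  Nat.card ((G.induce Sᶜ).ConnectedComponent)

/-- `G` is 1-tough: every cutset `S` satisfies `|S| ≥ s(G \ S)`. -/
def OneTough [Fintype V] (G : SimpleGraph V) : Prop :=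
  ∀ S : Finset V, 1 < compCount G ↑S → compCount G ↑S ≤ S.card

/-- The toughness of `G` equals 1. -/
def ToughnessEqOne [Fintype V] (G : SimpleGraph V) : Prop :=
  OneTough G ∧ ∃ S : Finset V, 1 < compCount G ↑S ∧ compCount G ↑S = S.card

/-- The vertex connectivity of `G` equals 2. -/
def ConnectivityEqTwo [Fintype V] (G : SimpleGraph V) : Prop :=
  (∀ S : Finset V, S.card ≤ 1 → (G.induce (↑S : Set V)ᶜ).Connected) ∧
  ∃ S : Finset V, S.card = 2 ∧ ¬ (G.induce (↑S : Set V)ᶜ).Connected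

/-- `G` is 3-connected: it stays connected after removing any 2 vertices. -/
def ThreeConnected [Fintype V] (G : SimpleGraph V) : Prop :=
  ∀ S : Finset V, S.card ≤ 2 → (G.induce (↑S : Set V)ᶜ).Connected

/-- `c` is a longest cycle of `G`. -/
def IsLongestCycle {G : SimpleGraph V} {u : V} (c : G.Walk u u) : Prop :=
  c.IsCycle ∧ ∀ (v : V) (d : G.Walk v v), d.IsCycle → d.length ≤ c.length

/-- The cycle `c` is dominating: `G \ V(c)` is edgeless. -/
def IsDominating {G : SimpleGraph V} {u : V} (c : G.Walk u u) : Prop :=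
  ∀ a b : V, G.Adj a b → a ∈ c.support ∨ b ∈ c.support

/-- The walk `p` avoids all vertices of the cycle `c`. -/
def AvoidsCycle {G : SimpleGraph V} {u x y : V} (c : G.Walk u u) (p : G.Walk x y) : Prop :=
  ∀ v ∈ p.support, v ∉ c.support

/-- `p` is a longest path of `G \ V(c)`. -/
def IsLongestPathOutside {G : SimpleGraph V} {u x y : V} (c : G.Walk u u)
    (p : G.Walk x y) : Prop :=
  p.IsPath ∧ AvoidsCycle c p ∧
  ∀ (a b : V) (q : G.Walk a b), q.IsPath → AvoidsCycle c q → q.length ≤ p.length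

/-- `N_C(x)`: the neighbors of `x` lying on the cycle `c`. -/
def NC [Fintype V] [DecidableEq V] (G : SimpleGraph V) [DecidableRel G.Adj]
    {u : V} (c : G.Walk u u) (x : V) : Finset V :=
  (G.neighborFinset x).filter (fun v => v ∈ c.support)

/-- The interior vertices of a segment (the walk minus its endpoints). -/
def interior {G : SimpleGraph V} {a b : V} (I : G.Walk a b) : Set V :=
  {v | v ∈ I.support ∧ v ≠ a ∧ v ≠ b}

/-- `I` is an elementary segment of the cycle `c` created by the attachment set `A`:
an arc of `c` between consecutive vertices of `A`. -/
def IsSegment {G : SimpleGraph V} {u : V} (c : G.Walk u u)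
    (A : Finset V) {a b : V} (I : G.Walk a b) : Prop :=
  I.IsPath ∧ 1 ≤ I.length ∧ a ∈ A ∧ b ∈ A ∧
  (∀ v ∈ I.support, v ∈ c.support) ∧
  (∀ e ∈ I.edges, e ∈ c.edges) ∧
  ∀ v ∈ interior I, v ∉ A

/-- `L` is an intermediate path between the elementary segments `Ia` and `Ib`:
it joins interior vertices of `Ia` and `Ib` and is internally disjoint from `c ∪ P`. -/
def IsIntermediatePath {G : SimpleGraph V} {u x y : V} (c : G.Walk u u) (P : G.Walk x y)
    {a b a' b' z w : V} (Ia : G.Walk a b) (Ib : G.Walk a' b') (L : G.Walk z w) : Prop :=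
  L.IsPath ∧ 1 ≤ L.length ∧ z ∈ interior Ia ∧ w ∈ interior Ib ∧
  ∀ v ∈ L.support, (v ∈ c.support ∨ v ∈ P.support) → v = z ∨ v = w

/-- Membership in the exceptional class `𝔉₁`. -/
def InF1 [Fintype V] (H : SimpleGraph V) [DecidableRel H.Adj] (d : ℕ) : Prop :=
  ∃ (x y₁ y₂ y₃ : V) (A : Fin 3 → Set V),
    (∀ i j, i ≠ j → A i ∩ A j = {x}) ∧
    (⋃ i, A i) = Set.univ ∧
    y₁ ∈ A 0 ∧ y₂ ∈ A 1 ∧ y₃ ∈ A 2 ∧ y₁ ≠ x ∧ y₂ ≠ x ∧ y₃ ≠ x ∧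
    H.Adj y₁ y₂ ∧ H.Adj y₂ y₃ ∧ H.Adj y₁ y₃ ∧
    (∀ a b : V, H.Adj a b → (∃ i, a ∈ A i ∧ b ∈ A i) ∨
      s(a, b) ∈ ({s(y₁, y₂), s(y₂, y₃), s(y₁, y₃)} : Set (Sym2 V))) ∧
    (∀ i, (H.induce (A i)).Connected) ∧
    Nat.card (A 0) = d + 1 ∧ Nat.card (A 1) = d + 1 ∧
    d + 1 ≤ Nat.card (A 2) ∧ Nat.card (A 2) ≤ d + 2 ∧
    H.minDegree = d ∧ 3 ≤ d

/-- Membership in the exceptional class `𝔉₂`. -/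
def InF2 [Fintype V] (H : SimpleGraph V) [DecidableRel H.Adj] : Prop :=
  ∃ (x z y₁ y₂ y₃ : V) (A : Fin 3 → Set V),
    (∀ i j, i ≠ j → A i ∩ A j = {x}) ∧
    ((⋃ i, A i) ∪ {z}) = Set.univ ∧ z ∉ ⋃ i, A i ∧
    y₁ ∈ A 0 ∧ y₂ ∈ A 1 ∧ y₃ ∈ A 2 ∧ y₁ ≠ x ∧ y₂ ≠ x ∧ y₃ ≠ x ∧
    H.Adj z y₁ ∧ H.Adj z y₂ ∧ H.Adj z y₃ ∧ H.Adj y₁ y₂ ∧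
    (∀ a b : V, H.Adj a b → (∃ i, a ∈ A i ∧ b ∈ A i) ∨
      s(a, b) ∈ ({s(z, y₁), s(z, y₂), s(z, y₃), s(y₁, y₂), s(y₁, y₃), s(y₂, y₃),
        s(z, x)} : Set (Sym2 V))) ∧
    (∀ i, Nat.card (A i) = 4) ∧ H.minDegree = 3

/-- Membership in the exceptional class `𝔉₃`. -/
def InF3 [Fintype V] (H : SimpleGraph V) [DecidableRel H.Adj] : Prop :=
  ∃ (x z y₁ y₂ y₃ : V) (A : Fin 3 → Set V),
    (∀ i j, i ≠ j → A i ∩ A j = {x}) ∧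
    ((⋃ i, A i) ∪ {z}) = Set.univ ∧ z ∉ ⋃ i, A i ∧
    y₁ ∈ A 0 ∧ y₂ ∈ A 1 ∧ y₃ ∈ A 2 ∧ y₁ ≠ x ∧ y₂ ≠ x ∧ y₃ ≠ x ∧
    H.Adj z y₁ ∧ H.Adj z y₂ ∧ H.Adj z y₃ ∧ H.Adj z x ∧ H.Adj y₁ y₂ ∧
    (∀ a b : V, H.Adj a b → (∃ i, a ∈ A i ∧ b ∈ A i) ∨
      s(a, b) ∈ ({s(z, y₁), s(z, y₂), s(z, y₃), s(z, x), s(y₁, y₂), s(y₁, y₃),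
        s(y₂, y₃)} : Set (Sym2 V))) ∧
    (∀ i, Nat.card (A i) = 5) ∧ H.minDegree = 4

/-- Membership in the exceptional class `𝔉₄`. -/
def InF4 [Fintype V] (H : SimpleGraph V) [DecidableRel H.Adj] : Prop :=
  ∃ (x y : V) (z : Fin 4 → V) (A : Fin 4 → Set V),
    x ≠ y ∧
    (∀ i j, i ≠ j → A i ∩ A j = {x, y}) ∧
    (⋃ i, A i) = Set.univ ∧
    (∀ i, z i ∈ A i ∧ z i ≠ x ∧ z i ≠ y) ∧
    H.Adj (z 0) (z 1) ∧ H.Adj (z 1) (z 2) ∧ H.Adj (z 0) (z 2) ∧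
    (∀ a b : V, H.Adj a b → (∃ i, a ∈ A i ∧ b ∈ A i) ∨
      s(a, b) ∈ ({s(z 0, z 1), s(z 1, z 2), s(z 0, z 2)} : Set (Sym2 V))) ∧
    (∀ i, Nat.card (A i) = 5) ∧ H.minDegree = 4

theorem _root_.SimpleGraph.Walk.exists_mem_support_ne {G : SimpleGraph V} {a b : V}
    {p : G.Walk a b} (hp : ¬p.Nil) (y : V) : ∃ w ∈ p.support, w ≠ y := by
  by_cases hay : a = y
  · exact ⟨p.snd, p.getVert_mem_support 1, hay ▸ (p.adj_snd hp).ne'⟩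
  · exact ⟨a, p.start_mem_support, hay⟩

theorem _root_.SimpleGraph.Walk.IsPath.cons_isCycle {G : SimpleGraph V} {a b : V}
    {p : G.Walk a b} (hp : p.IsPath) (h : G.Adj b a) (hlen : 2 ≤ p.length) :
    (Walk.cons h p).IsCycle :=
  (Walk.cons_isCycle_iff p h).2 ⟨hp, fun he => by
    have := hp.length_eq_one_of_mem_edges (Sym2.eq_swap ▸ he)
    omega⟩

theorem _root_.SimpleGraph.Walk.IsCycle.exists_isPath_to {G : SimpleGraph V} [DecidableEq V]
    {u z : V} {c : G.Walk u u} (hc : c.IsCycle) (hz : z ∈ c.support) :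
    ∃ (a : V) (q : G.Walk a z), q.IsPath ∧ q.length + 1 = c.length ∧ q.support ⊆ c.support := by
  have hr := hc.rotate hz
  refine ⟨_, (c.rotate z hz).tail, hr.isPath_tail, ?_, fun w hw => ?_⟩
  · rw [Walk.length_tail_add_one hr.not_nil, Walk.length_rotate]
  · rw [Walk.support_tail_of_not_nil _ hr.not_nil] at hw
    exact (Walk.mem_support_rotate_iff c z hz).1 (List.mem_of_mem_tail hw)

theorem _root_.SimpleGraph.Walk.IsPath.exists_pred [DecidableEq V] {G : SimpleGraph V}
    {a b z : V} {p : G.Walk a b} (hp : p.IsPath) (hz : z ∈ p.support) (hza : z ≠ a) :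
    ∃ zp, s(zp, z) ∈ p.edges ∧ p.support.idxOf zp + 1 = p.support.idxOf z ∧ zp ≠ b := by
  set k := p.support.idxOf z
  have hkz : p.getVert k = z := p.getVert_support_idxOf hz
  have hklen : k ≤ p.length := by
    have := List.idxOf_lt_length_of_mem hz
    rw [Walk.length_support] at this
    omega
  have hk0 : k ≠ 0 := fun h => hza (by rw [← hkz, h, Walk.getVert_zero])
  refine ⟨p.getVert (k - 1), ?_, ?_, ?_⟩
  · rw [Walk.mk_mem_edges_iff_exists]
    exact ⟨k - 1, by omega, by rw [Nat.sub_add_cancel (by omega), hkz]⟩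
  · rw [p.getVert_eq_support_getElem (by omega), hp.support_nodup.idxOf_getElem]
    omega
  · rw [Ne, hp.getVert_eq_end_iff (by omega)]
    omega

theorem mem_NC [Fintype V] [DecidableEq V] {G : SimpleGraph V} [DecidableRel G.Adj]
    {u x w : V} {c : G.Walk u u} : w ∈ NC G c x ↔ G.Adj x w ∧ w ∈ c.support := by
  simp [NC]

theorem exists_adj_mem_notMem_of_connected_induce_compl {G : SimpleGraph V} {T S : Set V}
    {a b : V} (hG : (G.induce Tᶜ).Connected) (ha : a ∈ S) (haT : a ∉ T) (hb : b ∉ S)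
    (hbT : b ∉ T) : ∃ z w, z ∈ S ∧ w ∉ S ∧ w ∉ T ∧ G.Adj z w := by
  obtain ⟨q⟩ := hG.preconnected ⟨a, haT⟩ ⟨b, hbT⟩
  obtain ⟨d, -, hd₁, hd₂⟩ := q.exists_boundary_dart {x : ↥Tᶜ | x.1 ∈ S} ha hb
  exact ⟨d.fst, d.snd, hd₁, hd₂, d.snd.2, d.adj⟩

namespace IsLongestPathOutside

variable {G : SimpleGraph V} {u x₁ x₂ : V} {c : G.Walk u u} {P : G.Walk x₁ x₂}

theorem reverse (hP : IsLongestPathOutside c P) : IsLongestPathOutside c P.reverse :=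
  ⟨hP.1.reverse, fun v hv => hP.2.1 v (by simpa using hv),
    fun a b q hq hqc => by simpa using hP.2.2 a b q hq hqc⟩

theorem mem_support_of_adj_start_of_le_length (hP : IsLongestPathOutside c P) {a b v : V}
    {q : G.Walk a b} (hq : q.IsPath) (hqc : AvoidsCycle c q) (hlen : P.length ≤ q.length)
    (hadj : G.Adj a v) (hv : v ∉ c.support) : v ∈ q.support := by
  by_contra hvq
  have hext := hP.2.2 v b (Walk.cons hadj.symm q) (hq.cons hvq) (fun w hw => by
    rcases List.mem_cons.1 hw with rfl | hw
    exacts [hv, hqc w hw])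
  rw [Walk.length_cons] at hext
  omega

theorem adj_start_of_minDegree [Fintype V] [DecidableEq V] [DecidableRel G.Adj]
    (hP : IsLongestPathOutside c P) (hδ : P.length + (NC G c x₁).card ≤ G.minDegree)
    {w : V} (hw : w ∈ P.support) (hwx : w ≠ x₁) : G.Adj x₁ w := by
  by_contra hnot
  have hsub : G.neighborFinset x₁ ⊆ NC G c x₁ ∪ (P.support.toFinset.erase x₁).erase w := by
    intro v hv
    rw [mem_neighborFinset] at hv
    by_cases hvc : v ∈ c.support
    · exact mem_union_left _ (mem_NC.2 ⟨hv, hvc⟩)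
    · have hvP := hP.mem_support_of_adj_start_of_le_length hP.1 hP.2.1 le_rfl hv hvc
      refine mem_union_right _ (mem_erase.2 ⟨?_, mem_erase.2 ⟨hv.ne', List.mem_toFinset.2 hvP⟩⟩)
      rintro rfl
      exact hnot hv
  have hcardw := card_erase_add_one (mem_erase.2 ⟨hwx, List.mem_toFinset.2 hw⟩)
  have hcardx := card_erase_add_one (List.mem_toFinset.2 P.start_mem_support)
  rw [List.toFinset_card_of_nodup hP.1.support_nodup, Walk.length_support] at hcardx
  have := (card_le_card hsub).trans (card_union_le _ _)
  have := G.minDegree_le_degree x₁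
  rw [← card_neighborFinset_eq_degree] at this
  omega

theorem mem_support_of_adj [DecidableEq V] (hP : IsLongestPathOutside c P)
    (hlen : 2 ≤ P.length) (hx : G.Adj x₂ x₁) {z v : V} (hz : z ∈ P.support) (hadj : G.Adj z v)
    (hv : v ∉ c.support) : v ∈ P.support := by
  have hPsupp : (Walk.cons hx P).support ⊆ P.support := by
    simp [Walk.support_cons, P.end_mem_support]
  obtain ⟨a, q, hq, hqlen, hqsupp⟩ :=
    (hP.1.cons_isCycle hx hlen).exists_isPath_to (List.mem_cons_of_mem _ hz)
  rw [Walk.length_cons] at hqlen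
  have hqP : q.support ⊆ P.support := List.Subset.trans hqsupp hPsupp
  have := hP.mem_support_of_adj_start_of_le_length hq.reverse
    (fun w hw => hP.2.1 w (hqP (by simpa using hw))) (by simp; omega) hadj hv
  exact hqP (by simpa using this)

end IsLongestPathOutside

theorem stmt_18 [Fintype V] [DecidableEq V] (G : SimpleGraph V) [DecidableRel G.Adj]
    (h2c : ∀ S : Finset V, S.card ≤ 1 → (G.induce (↑S : Set V)ᶜ).Connected)
    {u x₁ x₂ y₁ : V} (c : G.Walk u u) (P : G.Walk x₁ x₂)
    (hc : IsLongestCycle c) (hP : IsLongestPathOutside c P)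
    (hp : 2 ≤ P.length) (hpd : P.length + 1 = G.minDegree)
    (h1 : NC G c x₁ = {y₁}) (h2 : NC G c x₂ = {y₁}) :
    ∃ z w zp : V, z ∈ P.support ∧ z ≠ x₁ ∧ z ≠ x₂ ∧
      w ∈ c.support ∧ w ≠ y₁ ∧ G.Adj z w ∧
      s(zp, z) ∈ P.edges ∧ P.support.idxOf zp + 1 = P.support.idxOf z ∧
      G.Adj x₂ zp := by
  have hy₁ : y₁ ∈ c.support := (mem_NC.1 (h1 ▸ mem_singleton_self y₁)).2
  have hx₁y₁ : x₁ ≠ y₁ := fun h => hP.2.1 x₁ P.start_mem_support (h ▸ hy₁)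
  have hx₁x₂ : x₁ ≠ x₂ := by
    rintro rfl
    have := Walk.length_eq_zero_iff.2 (Walk.isPath_iff_nil.1 hP.1)
    omega
  have hx₂P : ∀ w ∈ P.support, w ≠ x₂ → G.Adj x₂ w := fun w hw hwx =>
    hP.reverse.adj_start_of_minDegree (by simp [h2, hpd]) (by simpa using hw) hwx
  obtain ⟨w₀, hw₀c, hw₀y⟩ := Walk.exists_mem_support_ne hc.1.not_nil y₁
  obtain ⟨z, w, hzP, hwP, hwy, hzw⟩ := exists_adj_mem_notMem_of_connected_induce_compl
    (h2c {y₁} (card_singleton y₁).le) (S := {v | v ∈ P.support}) P.start_mem_support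
    (by simpa using hx₁y₁) (fun h => hP.2.1 w₀ h hw₀c) (by simpa using hw₀y)
  simp only [coe_singleton, Set.mem_singleton_iff] at hwy
  have hwc : w ∈ c.support := by
    by_contra h
    exact hwP (hP.mem_support_of_adj hp (hx₂P x₁ P.start_mem_support hx₁x₂) hzP hzw h)
  have hz : ∀ x, NC G c x = {y₁} → z ≠ x := by
    rintro x hx rfl
    simpa [hx, hwy] using mem_NC.2 ⟨hzw, hwc⟩
  obtain ⟨zp, hedge, hidx, hzp⟩ := hP.1.exists_pred hzP (hz x₁ h1)
  exact ⟨z, w, zp, hzP, hz x₁ h1, hz x₂ h2, hwc, hwy, hzw, hedge, hidx,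
    hx₂P zp (P.fst_mem_support_of_mem_edges hedge) hzp⟩
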